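/- Let C be an unfinished connected nonnegative configuration with at least two cubes such that no non-cut subpillar of C satisfies any of conditions (a)–(e) and C admits no move of type (f). If H is a high component of C such that C∖H is connected, then every pillar of H is contained in a pillar of C whose bottommost cube has z-coordinate 0. -/

import Mathlib

/-- A cube is a point of `ℤ³`. -/
abbrev Cube : Type := ℤ × ℤ × ℤ

/-- Two cubes are adjacent if they lie at `L1`-distance `1`. -/
def cubeAdj (a b : Cube) : Prop :=
  (a.1 - b.1).natAbs + (a.2.1 - b.2.1).natAbs + (a.2.2 - b.2.2).natAbs = 1

lemma cubeAdj_symm {a b : Cube} (h : cubeAdj a b) : cubeAdj b a := by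
  unfold cubeAdj at h ⊢
  omega

lemma cubeAdj_irrefl (a : Cube) : ¬ cubeAdj a a := by
  unfold cubeAdj; simp

/-- The graph `G_S` on a set of cubes `S`, connecting adjacent cubes of `S`. -/
def gph (S : Finset Cube) : SimpleGraph Cube where
  Adj a b := a ∈ S ∧ b ∈ S ∧ cubeAdj a b
  symm := by
    constructor
    rintro a b ⟨ha, hb, h⟩
    exact ⟨hb, ha, cubeAdj_symm h⟩
  loopless := by
    constructor
    rintro a ⟨-, -, h⟩
    exact cubeAdj_irrefl a h

/-- A set of cubes is connected if it is nonempty and all its cubes are joined by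
paths of adjacent cubes inside the set. -/
def Conn (S : Finset Cube) : Prop :=
  S.Nonempty ∧ ∀ a ∈ S, ∀ b ∈ S, (gph S).Reachable a b

/-- Connected or empty. -/
def ConnOrEmpty (S : Finset Cube) : Prop := S = ∅ ∨ Conn S

/-- A configuration is nonnegative if all coordinates of all its cubes are `≥ 0`. -/
def Nonneg (C : Finset Cube) : Prop := ∀ c ∈ C, 0 ≤ c.1 ∧ 0 ≤ c.2.1 ∧ 0 ≤ c.2.2

/-- `Sq4 p q r s` : the four points form a 4-cycle `p-q-r-s-p` in the unit-distance
graph on `ℤ³`. -/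
def Sq4 (p q r s : Cube) : Prop :=
  cubeAdj p q ∧ cubeAdj q r ∧ cubeAdj r s ∧ cubeAdj s p ∧ p ≠ r ∧ q ≠ s

/-- Slide: there is a 4-cycle `c, c', r, s` with exactly the three vertices
other than `c'` in `C` (and `c` adjacent to `c'`). -/
def IsSlide (C : Finset Cube) (c c' : Cube) : Prop :=
  c ∈ C ∧ c' ∉ C ∧ ∃ r s, Sq4 c c' r s ∧ r ∈ C ∧ s ∈ C

/-- Convex transition: there is a 4-cycle `c, q, c', s` with exactly two
(adjacent) vertices in `C`, one of them `c`, and `c'` opposite to `c`. -/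
def IsConvexTrans (C : Finset Cube) (c c' : Cube) : Prop :=
  c ∈ C ∧ c' ∉ C ∧ ∃ q s, Sq4 c q c' s ∧ ((q ∈ C ∧ s ∉ C) ∨ (s ∈ C ∧ q ∉ C))

/-- A move replaces `c ∈ C` by `c' ∉ C` via a slide or a convex transition,
such that `C \ {c}` is connected. -/
def IsMoveVia (C : Finset Cube) (c c' : Cube) : Prop :=
  (IsSlide C c c' ∨ IsConvexTrans C c c') ∧ Conn (C.erase c)

/-- `C'` is obtained from `C` by a single move. -/
def MoveStep (C C' : Finset Cube) : Prop :=
  ∃ c c', IsMoveVia C c c' ∧ C' = insert c' (C.erase c)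

/-- `MoveSeq C m C'` : a sequence of `m` moves from `C` to `C'`, each resulting in a
connected configuration. -/
def MoveSeq (C : Finset Cube) (m : ℕ) (C' : Finset Cube) : Prop :=
  ∃ f : ℕ → Finset Cube, f 0 = C ∧ f m = C' ∧
    ∀ i < m, MoveStep (f i) (f (i + 1)) ∧ Conn (f (i + 1))

/-- Sum of `x`-coordinates of `C`. -/
def Xsum (C : Finset Cube) : ℤ := ∑ c ∈ C, c.1

/-- Sum of `y`-coordinates of `C`. -/
def Ysum (C : Finset Cube) : ℤ := ∑ c ∈ C, c.2.1

/-- Sum of `z`-coordinates of `C`. -/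
def Zsum (C : Finset Cube) : ℤ := ∑ c ∈ C, c.2.2

/-- A cube `c` is finished in `C` if the whole box spanned by the origin and `c`
is contained in `C`. -/
def FinishedCube (C : Finset Cube) (c : Cube) : Prop :=
  ∀ p : Cube, 0 ≤ p.1 → p.1 ≤ c.1 → 0 ≤ p.2.1 → p.2.1 ≤ c.2.1 →
    0 ≤ p.2.2 → p.2.2 ≤ c.2.2 → p ∈ C

/-- A finished configuration: nonnegative and all cubes finished. -/
def FinishedConfig (C : Finset Cube) : Prop :=
  Nonneg C ∧ ∀ c ∈ C, FinishedCube C c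

/-- The weight of a cube. -/
def weight (c : Cube) : ℤ :=
  if 1 < c.2.2 then 5
  else if c.2.2 = 1 then 4
  else if 1 < c.2.1 then 3
  else if c.2.1 = 1 then 2
  else 1

/-- The potential of a cube `(x, y, z)` is `w • (x + 2y + 4z)`. -/
def pot (c : Cube) : ℤ := weight c * (c.1 + 2 * c.2.1 + 4 * c.2.2)

/-- The potential of a configuration. -/
def Pot (C : Finset Cube) : ℤ := ∑ c ∈ C, pot c

/-- `SafeSeq C K` : `C` admits a sequence of `m ≥ 1` moves, each resulting in a connected
configuration, ending in a nonnegative configuration `C'` of strictly smaller potential,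
with `m ≤ K • (Π_C - Π_{C'})`. -/
def SafeSeq (C : Finset Cube) (K : ℕ) : Prop :=
  ∃ (m : ℕ) (C' : Finset Cube), 1 ≤ m ∧ MoveSeq C m C' ∧ Nonneg C' ∧
    Pot C' < Pot C ∧ (m : ℤ) ≤ (K : ℤ) * (Pot C - Pot C')

/-- The set of cubes `{x} × {y} × {z_b, …, z_t}`. -/
noncomputable def pillarSet (x y zb zt : ℤ) : Finset Cube :=
  (Finset.Icc zb zt).image fun z => (x, y, z)

/-- `P(x,y,z_b,z_t)` is a subpillar of `S`. -/
def IsSubpillar (S : Finset Cube) (x y zb zt : ℤ) : Prop :=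
  zb ≤ zt ∧ pillarSet x y zb zt ⊆ S

/-- A pillar of `S`: a maximal subpillar. -/
def IsPillar (S : Finset Cube) (x y zb zt : ℤ) : Prop :=
  IsSubpillar S x y zb zt ∧ (x, y, zb - 1) ∉ S ∧ (x, y, zt + 1) ∉ S

/-- `(x', y')` is one of the four sides of the column `(x, y)`. -/
def IsSide (x y x' y' : ℤ) : Prop :=
  (x' = x - 1 ∧ y' = y) ∨ (x' = x + 1 ∧ y' = y) ∨
  (x' = x ∧ y' = y - 1) ∨ (x' = x ∧ y' = y + 1)

/-- `P'(x',y',z'_b,z'_t)` is a pillar of `C` lying on a side of `P(x,y,z_b,z_t)`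
and adjacent to it. -/
def AdjPillar (C : Finset Cube) (x y zb zt x' y' z'b z't : ℤ) : Prop :=
  IsPillar C x' y' z'b z't ∧ IsSide x y x' y' ∧ z'b ≤ zt ∧ zb ≤ z't

/-- A cut cube of `C`: a cube whose removal disconnects `C`. -/
def IsCutCube (C : Finset Cube) (c : Cube) : Prop :=
  c ∈ C ∧ ¬ Conn (C.erase c)

/-- Condition (a): on some side the topmost adjacent pillar
`P'` satisfies `z'_t ≤ z_t - 2`. -/
def CondA (C : Finset Cube) (x y zb zt : ℤ) : Prop :=
  ∃ x' y' z'b z't, AdjPillar C x y zb zt x' y' z'b z't ∧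
    (∀ z''b z''t, AdjPillar C x y zb zt x' y' z''b z''t → z''t ≤ z't) ∧
    z't ≤ zt - 2

/-- Condition (b): some adjacent pillar `P'` has `z'_b > z_b` and
`(x, y, z'_b - 1)` is not a cut cube of `C`. -/
def CondB (C : Finset Cube) (x y zb zt : ℤ) : Prop :=
  ∃ x' y' z'b z't, AdjPillar C x y zb zt x' y' z'b z't ∧ zb < z'b ∧
    ¬ IsCutCube C (x, y, z'b - 1)

/-- Condition (c): `(x, y, z_b - 1) ∉ C` and some adjacent pillar has `z'_b < z_b`. -/
def CondC (C : Finset Cube) (x y zb zt : ℤ) : Prop :=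
  (x, y, zb - 1) ∉ C ∧
  ∃ x' y' z'b z't, AdjPillar C x y zb zt x' y' z'b z't ∧ z'b < zb

/-- Condition (d): `(x, y, z_b - 1) ∉ C` and on some side the bottommost adjacent
pillar `P'` satisfies `z'_b = z_b > 0`. -/
def CondD (C : Finset Cube) (x y zb zt : ℤ) : Prop :=
  (x, y, zb - 1) ∉ C ∧
  ∃ x' y' z'b z't, AdjPillar C x y zb zt x' y' z'b z't ∧
    (∀ z''b z''t, AdjPillar C x y zb zt x' y' z''b z''t → z'b ≤ z''b) ∧
    z'b = zb ∧ 0 < zb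

/-- Condition (e): at most one adjacent pillar on each side; there is an adjacent
pillar `P'` with `z'_b > z_b`, minimal such; and some other side `(x'', y'')` has
`(x'', y'', z_b) ∉ C`. -/
def CondE (C : Finset Cube) (x y zb zt : ℤ) : Prop :=
  (∀ x' y' z'b z't z''b z''t, AdjPillar C x y zb zt x' y' z'b z't →
      AdjPillar C x y zb zt x' y' z''b z''t → z'b = z''b ∧ z't = z''t) ∧
  ∃ x' y' z'b z't, AdjPillar C x y zb zt x' y' z'b z't ∧ zb < z'b ∧
    (∀ x'' y'' z''b z''t, AdjPillar C x y zb zt x'' y'' z''b z''t →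
      zb < z''b → z'b ≤ z''b) ∧
    ∃ x'' y'', IsSide x y x'' y'' ∧ (x'', y'') ≠ (x', y') ∧ (x'', y'', zb) ∉ C

/-- No non-cut subpillar of `C` satisfies any of the conditions (a)--(e). -/
def NoCondAE (C : Finset Cube) : Prop :=
  ∀ x y zb zt, IsSubpillar C x y zb zt →
    ConnOrEmpty (C \ pillarSet x y zb zt) →
    ¬ (CondA C x y zb zt ∨ CondB C x y zb zt ∨ CondC C x y zb zt ∨
       CondD C x y zb zt ∨ CondE C x y zb zt)

/-- Two sets of cubes are adjacent if some cube of one is adjacent to a cube of the other. -/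
def AdjSets (S T : Finset Cube) : Prop := ∃ a ∈ S, ∃ b ∈ T, cubeAdj a b

/-- The cubes of `C` with `z > 0`. -/
def Cpos (C : Finset Cube) : Finset Cube := C.filter fun c => 0 < c.2.2

/-- The cubes of `C` with `z = 0`. -/
def Czero (C : Finset Cube) : Finset Cube := C.filter fun c => c.2.2 = 0

/-- `H` is a connected component of `G_S`: nonempty, connected and closed under
adjacency within `S`. -/
def IsCompOf (S H : Finset Cube) : Prop :=
  H ⊆ S ∧ Conn H ∧ ∀ a ∈ H, ∀ b ∈ S, cubeAdj a b → b ∈ H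

/-- A high component of `C`: a connected component of `G_{C_{>0}}`. -/
def IsHighComp (C H : Finset Cube) : Prop := IsCompOf (Cpos C) H

/-- A low component of `C`: a connected component of `G_{C_0}`. -/
def IsLowComp (C L : Finset Cube) : Prop := IsCompOf (Czero C) L

/-- A move of type (f): it moves a cube with `z > 0`, strictly decreases the
potential, and results in a nonnegative configuration. -/
def MoveTypeF (C : Finset Cube) : Prop :=
  ∃ c c', IsMoveVia C c c' ∧ 0 < c.2.2 ∧
    Nonneg (insert c' (C.erase c)) ∧ Pot (insert c' (C.erase c)) < Pot C

/-- `R` is the root: the low component containing the origin if `(0,0,0) ∈ C`,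
an arbitrary low component otherwise. -/
def IsRoot (C R : Finset Cube) : Prop :=
  IsLowComp C R ∧ (((0 : ℤ), (0 : ℤ), (0 : ℤ)) ∈ C → ((0 : ℤ), (0 : ℤ), (0 : ℤ)) ∈ R)

/-- A clear low component `L` (w.r.t. root `R`): `C \ L` is connected, `L ≠ R`, and
some pillar of `C \ L` adjacent to `L` is non-cut in `C \ L`. -/
def IsClear (C R L : Finset Cube) : Prop :=
  IsLowComp C L ∧ Conn (C \ L) ∧ L ≠ R ∧
  ∃ x y zb zt, IsPillar (C \ L) x y zb zt ∧ AdjSets (pillarSet x y zb zt) L ∧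
    ConnOrEmpty ((C \ L) \ pillarSet x y zb zt)

/-- `P(x,y,z_b,z_t)` is a clearing pillar of the clear low component `L`. -/
def IsClearingPillar (C R L : Finset Cube) (x y zb zt : ℤ) : Prop :=
  IsClear C R L ∧ IsPillar (C \ L) x y zb zt ∧ AdjSets (pillarSet x y zb zt) L ∧
    ConnOrEmpty ((C \ L) \ pillarSet x y zb zt)

/-- A move of type (g): it moves a cube of some clear low component, strictly
decreases the potential, and results in a nonnegative configuration. -/
def MoveTypeG (C R : Finset Cube) : Prop :=
  ∃ L, IsClear C R L ∧ ∃ c c', IsMoveVia C c c' ∧ c ∈ L ∧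
    Nonneg (insert c' (C.erase c)) ∧ Pot (insert c' (C.erase c)) < Pot C

/-- The low-high graph `LH_C`: its vertices are the low and high components of `C`,
with edges between adjacent low and high components. -/
def LH (C : Finset Cube) : SimpleGraph (Finset Cube) where
  Adj S T := S ≠ T ∧ AdjSets S T ∧
    ((IsLowComp C S ∧ IsHighComp C T) ∨ (IsHighComp C S ∧ IsLowComp C T))
  symm := by
    constructor
    rintro S T ⟨hne, ⟨a, ha, b, hb, hab⟩, h⟩
    exact ⟨hne.symm, ⟨b, hb, a, ha, cubeAdj_symm hab⟩, h.symm.imp And.symm And.symm⟩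
  loopless := ⟨fun S h => h.1 rfl⟩

/-- `c` lies in the bounding box of `C`. -/
def InBBox (C : Finset Cube) (c : Cube) : Prop :=
  (∃ a ∈ C, a.1 ≤ c.1) ∧ (∃ a ∈ C, c.1 ≤ a.1) ∧
  (∃ a ∈ C, a.2.1 ≤ c.2.1) ∧ (∃ a ∈ C, c.2.1 ≤ a.2.1) ∧
  (∃ a ∈ C, a.2.2 ≤ c.2.2) ∧ (∃ a ∈ C, c.2.2 ≤ a.2.2)

section Dev

open Finset

variable {C S T X Q H : Finset Cube} {a b c u v w : Cube}

lemma mem_pillarSet {x y zb zt : ℤ} {c : Cube} :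
    c ∈ pillarSet x y zb zt ↔ c.1 = x ∧ c.2.1 = y ∧ zb ≤ c.2.2 ∧ c.2.2 ≤ zt := by
  obtain ⟨cx, cy, cz⟩ := c
  simp only [pillarSet, Finset.mem_image, Finset.mem_Icc, Prod.mk.injEq]
  constructor
  · rintro ⟨z, ⟨h1, h2⟩, rfl, rfl, rfl⟩; exact ⟨rfl, rfl, h1, h2⟩
  · rintro ⟨rfl, rfl, h1, h2⟩; exact ⟨cz, ⟨h1, h2⟩, rfl, rfl, rfl⟩

lemma mem_pillarSet' {x y zb zt x0 y0 z0 : ℤ} :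
    ((x0, y0, z0) : Cube) ∈ pillarSet x y zb zt ↔ x0 = x ∧ y0 = y ∧ zb ≤ z0 ∧ z0 ≤ zt :=
  mem_pillarSet

lemma gph_mono (h : S ⊆ T) : gph S ≤ gph T := by
  intro a b hab
  exact ⟨h hab.1, h hab.2.1, hab.2.2⟩

lemma reach_mono (h : S ⊆ T) (hr : (gph S).Reachable a b) : (gph T).Reachable a b :=
  hr.mono (gph_mono h)

/-- connected component of `a` in `X`. -/
noncomputable def comp (X : Finset Cube) (a : Cube) : Finset Cube :=
  @Finset.filter _ (fun b => (gph X).Reachable a b) (Classical.decPred _) X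

lemma mem_comp : b ∈ comp X a ↔ b ∈ X ∧ (gph X).Reachable a b := by
  simp [comp]

lemma comp_subset : comp X a ⊆ X := fun b hb => (mem_comp.1 hb).1

lemma self_mem_comp (ha : a ∈ X) : a ∈ comp X a := mem_comp.2 ⟨ha, .refl a⟩

lemma comp_eq_of_reach (ha : a ∈ X) (hb : b ∈ X) (h : (gph X).Reachable a b) :
    comp X a = comp X b := by
  ext c
  simp only [mem_comp]
  exact ⟨fun ⟨hc, hr⟩ => ⟨hc, h.symm.trans hr⟩, fun ⟨hc, hr⟩ => ⟨hc, h.trans hr⟩⟩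

lemma comp_closed (hb : b ∈ comp X a) (hd : c ∈ X) (hadj : cubeAdj b c) : c ∈ comp X a := by
  obtain ⟨hbX, hr⟩ := mem_comp.1 hb
  exact mem_comp.2 ⟨hd, hr.trans (SimpleGraph.Adj.reachable ⟨hbX, hd, hadj⟩)⟩

lemma walk_reach_comp : ∀ {u v : Cube}, (gph X).Walk u v → (gph (comp X u)).Reachable u v := by
  intro u v w
  induction w with
  | nil => exact SimpleGraph.Reachable.refl _
  | @cons u m v h p ih =>
    have hm : m ∈ comp X u := comp_closed (self_mem_comp h.1) h.2.1 h.2.2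
    have h1 : (gph (comp X u)).Reachable u m :=
      SimpleGraph.Adj.reachable ⟨self_mem_comp h.1, hm, h.2.2⟩
    have : comp X m = comp X u :=
      comp_eq_of_reach h.2.1 h.1 (SimpleGraph.Adj.reachable ⟨h.2.1, h.1, cubeAdj_symm h.2.2⟩)
    exact h1.trans (this ▸ ih)

lemma reach_in_comp (hb : b ∈ comp X a) : (gph (comp X a)).Reachable a b := by
  obtain ⟨-, hr⟩ := mem_comp.1 hb
  exact hr.elim fun w => walk_reach_comp w

lemma conn_comp (ha : a ∈ X) : Conn (comp X a) := by
  refine ⟨⟨a, self_mem_comp ha⟩, fun b hb c hc => ?_⟩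
  exact (reach_in_comp hb).symm.trans (reach_in_comp hc)

lemma conn_union (hS : Conn S) (hT : Conn T) (hu : u ∈ S) (hv : v ∈ T) (huv : cubeAdj u v) :
    Conn (S ∪ T) := by
  have key : ∀ a ∈ S ∪ T, (gph (S ∪ T)).Reachable a u := by
    intro a ha
    rcases Finset.mem_union.1 ha with h | h
    · exact reach_mono (Finset.subset_union_left) (hS.2 a h u hu)
    · refine (reach_mono (Finset.subset_union_right) (hT.2 a h v hv)).trans ?_
      exact SimpleGraph.Adj.reachable
        ⟨Finset.mem_union_right _ hv, Finset.mem_union_left _ hu, cubeAdj_symm huv⟩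
  exact ⟨⟨u, Finset.mem_union_left _ hu⟩, fun a ha b hb => (key a ha).trans (key b hb).symm⟩

lemma cubeAdj_vert {x y z : ℤ} : cubeAdj (x, y, z) (x, y, z + 1) := by
  show (x - x).natAbs + (y - y).natAbs + (z - (z+1)).natAbs = 1
  omega

lemma reach_pillar {x y zb zt : ℤ} {W : Finset Cube} (hsub : pillarSet x y zb zt ⊆ W) :
    ∀ (n : ℕ) (z : ℤ), zb ≤ z → z + n ≤ zt → (gph W).Reachable (x, y, z) (x, y, z + n) := by
  intro n
  induction n with
  | zero => intro z _ _; simpa using SimpleGraph.Reachable.refl _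
  | succ n ih =>
    intro z hz hzn
    have hzn' : z + (n : ℤ) + 1 ≤ zt := by push_cast at hzn; omega
    have h1 : ((x, y, z) : Cube) ∈ W :=
      hsub (mem_pillarSet.2 ⟨rfl, rfl, hz, show z ≤ zt by omega⟩)
    have h2 : ((x, y, z + 1) : Cube) ∈ W :=
      hsub (mem_pillarSet.2 ⟨rfl, rfl, show zb ≤ z + 1 by omega, show z + 1 ≤ zt by omega⟩)
    have e : (gph W).Reachable (x, y, z) (x, y, z + 1) :=
      SimpleGraph.Adj.reachable ⟨h1, h2, cubeAdj_vert⟩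
    have := ih (z + 1) (by omega) (by push_cast at hzn ⊢; omega)
    refine e.trans ?_
    have hcast : (z + 1) + (n : ℤ) = z + ((n : ℕ) + 1 : ℕ) := by push_cast; ring
    rwa [hcast] at this

lemma reach_pillar' {x y zb zt z z' : ℤ} {W : Finset Cube} (hsub : pillarSet x y zb zt ⊆ W)
    (h1 : zb ≤ z) (h2 : z ≤ zt) (h3 : zb ≤ z') (h4 : z' ≤ zt) :
    (gph W).Reachable (x, y, z) (x, y, z') := by
  rcases le_total z z' with h | h
  · have := reach_pillar hsub (z' - z).toNat z h1 (by omega)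
    have hz : z + ((z' - z).toNat : ℤ) = z' := by omega
    rwa [hz] at this
  · have := reach_pillar hsub (z - z').toNat z' h3 (by omega)
    have hz : z' + ((z - z').toNat : ℤ) = z := by omega
    rw [hz] at this
    exact this.symm

lemma conn_pillarSet {x y zb zt : ℤ} (h : zb ≤ zt) : Conn (pillarSet x y zb zt) := by
  refine ⟨⟨(x, y, zb), mem_pillarSet.2 ⟨rfl, rfl, le_refl _, h⟩⟩, fun a ha b hb => ?_⟩
  obtain ⟨ax, ay, az⟩ := a
  obtain ⟨bx, by', bz⟩ := b
  obtain ⟨rfl, rfl, h1, h2⟩ := mem_pillarSet.1 ha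
  obtain ⟨rfl, rfl, h3, h4⟩ := mem_pillarSet.1 hb
  exact reach_pillar' (subset_refl _) h1 h2 h3 h4

end Dev
section Dev2

open Finset

variable {C S T X Q H : Finset Cube} {a b c u v w : Cube}

lemma pillar_down (hN : Nonneg C) :
    ∀ (n : ℕ) (x y z : ℤ), z.toNat ≤ n → (x, y, z) ∈ C →
      ∃ zb, zb ≤ z ∧ (∀ u, zb ≤ u → u ≤ z → (x, y, u) ∈ C) ∧ (x, y, zb - 1) ∉ C := by
  intro n
  induction n with
  | zero =>
    intro x y z hz hc
    have hz0 : 0 ≤ z := (hN _ hc).2.2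
    have hz1 : z = 0 := by omega
    subst hz1
    refine ⟨0, le_refl _, fun u h1 h2 => ?_, fun hmem => ?_⟩
    · have : u = 0 := le_antisymm h2 h1
      subst this; exact hc
    · have h5 : (0 : ℤ) ≤ 0 - 1 := (hN _ hmem).2.2
      omega
  | succ n ih =>
    intro x y z hz hc
    by_cases hb : (x, y, z - 1) ∈ C
    · have h0 : (0 : ℤ) ≤ z - 1 := (hN _ hb).2.2
      obtain ⟨zb, h1, h2, h3⟩ := ih x y (z - 1) (by omega) hb
      refine ⟨zb, by omega, fun u hu1 hu2 => ?_, h3⟩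
      rcases eq_or_lt_of_le hu2 with h | h
      · subst h; exact hc
      · exact h2 u hu1 (by omega)
    · exact ⟨z, le_refl _, fun u h1 h2 => by
        have : u = z := le_antisymm h2 h1
        subst this; exact hc, hb⟩

lemma pillar_up {M : ℤ} (hM : ∀ c ∈ C, c.2.2 ≤ M) :
    ∀ (n : ℕ) (x y z : ℤ), (M - z).toNat ≤ n → (x, y, z) ∈ C →
      ∃ zt, z ≤ zt ∧ (∀ u, z ≤ u → u ≤ zt → (x, y, u) ∈ C) ∧ (x, y, zt + 1) ∉ C := by
  intro n
  induction n with
  | zero =>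
    intro x y z hz hc
    have hzM : z ≤ M := hM _ hc
    have hz1 : z = M := by omega
    refine ⟨z, le_refl _, fun u h1 h2 => ?_, fun hmem => ?_⟩
    · have : u = z := le_antisymm h2 h1
      subst this; exact hc
    · have h5 : z + 1 ≤ M := hM _ hmem
      omega
  | succ n ih =>
    intro x y z hz hc
    by_cases hb : (x, y, z + 1) ∈ C
    · have h0 : z + 1 ≤ M := hM _ hb
      obtain ⟨zt, h1, h2, h3⟩ := ih x y (z + 1) (by omega) hb
      refine ⟨zt, by omega, fun u hu1 hu2 => ?_, h3⟩
      rcases eq_or_lt_of_le hu1 with h | h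
      · subst h; exact hc
      · exact h2 u (by omega) hu2
    · exact ⟨z, le_refl _, fun u h1 h2 => by
        have : u = z := le_antisymm h2 h1
        subst this; exact hc, hb⟩

lemma exists_pillar_mem (hN : Nonneg C) (hc : c ∈ C) :
    ∃ zb zt, IsPillar C c.1 c.2.1 zb zt ∧ zb ≤ c.2.2 ∧ c.2.2 ≤ zt := by
  obtain ⟨cx, cy, cz⟩ := c
  have hne : C.Nonempty := ⟨_, hc⟩
  set M := (C.image fun d => d.2.2).max' (hne.image _) with hMdef
  have hM : ∀ d ∈ C, d.2.2 ≤ M := by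
    intro d hd
    exact Finset.le_max' _ d.2.2 (Finset.mem_image.2 ⟨d, hd, rfl⟩)
  obtain ⟨zb, hzb1, hzb2, hzb3⟩ := pillar_down hN cz.toNat cx cy cz (le_refl _) hc
  obtain ⟨zt, hzt1, hzt2, hzt3⟩ := pillar_up hM (M - cz).toNat cx cy cz (le_refl _) hc
  refine ⟨zb, zt, ⟨⟨by omega, fun d hd => ?_⟩, hzb3, hzt3⟩, hzb1, hzt1⟩
  obtain ⟨dx, dy, dz⟩ := d
  obtain ⟨h1, h2, h3, h4⟩ := mem_pillarSet.1 hd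
  simp only at h1 h2 h3 h4
  subst h1; subst h2
  rcases le_total dz cz with h | h
  · exact hzb2 dz h3 h
  · exact hzt2 dz h h4

lemma pillar_eq {x y b t b' t' z : ℤ} (h1 : IsPillar C x y b t) (h2 : IsPillar C x y b' t')
    (ha : b ≤ z) (hb : z ≤ t) (hc : b' ≤ z) (hd : z ≤ t') : b = b' ∧ t = t' := by
  have hbb : b = b' := by
    by_contra hne
    rcases lt_or_gt_of_ne hne with h | h
    · exact h2.2.1 (h1.1.2 (mem_pillarSet'.2 ⟨rfl, rfl, by omega, by omega⟩))
    · exact h1.2.1 (h2.1.2 (mem_pillarSet'.2 ⟨rfl, rfl, by omega, by omega⟩))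
  have htt : t = t' := by
    by_contra hne
    rcases lt_or_gt_of_ne hne with h | h
    · exact h1.2.2 (h2.1.2 (mem_pillarSet'.2 ⟨rfl, rfl, by omega, by omega⟩))
    · exact h2.2.2 (h1.1.2 (mem_pillarSet'.2 ⟨rfl, rfl, by omega, by omega⟩))
  exact ⟨hbb, htt⟩

lemma side_adj {x y x' y' l : ℤ} (h : IsSide x y x' y') : cubeAdj (x', y', l) (x, y, l) := by
  show (x' - x).natAbs + (y' - y).natAbs + (l - l).natAbs = 1
  unfold IsSide at h
  omega

lemma side_ne_col {x y x' y' : ℤ} (h : IsSide x y x' y') : ¬(x' = x ∧ y' = y) := by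
  unfold IsSide at h; omega

/-- classification of adjacency. -/
lemma cubeAdj_cases {a b : Cube} (h : cubeAdj a b) :
    (a.2.2 = b.2.2 ∧ IsSide b.1 b.2.1 a.1 a.2.1) ∨
    (a.1 = b.1 ∧ a.2.1 = b.2.1 ∧ (a.2.2 = b.2.2 + 1 ∨ a.2.2 = b.2.2 - 1)) := by
  unfold cubeAdj at h
  unfold IsSide
  omega

lemma reach_enters (hQ : Q ⊆ C) :
    ∀ {a q : Cube}, (gph C).Walk a q → a ∉ Q → q ∈ Q →
      ∃ v, v ∈ comp (C \ Q) a ∧ ∃ w, w ∈ Q ∧ cubeAdj v w := by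
  intro a q wk
  induction wk with
  | nil => intro ha hq; exact absurd hq ha
  | @cons a m q h p ih =>
    intro ha hq
    by_cases hm : m ∈ Q
    · exact ⟨a, self_mem_comp (Finset.mem_sdiff.2 ⟨h.1, ha⟩), m, hm, h.2.2⟩
    · obtain ⟨v, hv, hw⟩ := ih hm hq
      have hmm : m ∈ C \ Q := Finset.mem_sdiff.2 ⟨h.2.1, hm⟩
      have haa : a ∈ C \ Q := Finset.mem_sdiff.2 ⟨h.1, ha⟩
      have : comp (C \ Q) m = comp (C \ Q) a :=
        comp_eq_of_reach hmm haa (SimpleGraph.Adj.reachable ⟨hmm, haa, cubeAdj_symm h.2.2⟩)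
      exact ⟨v, this ▸ hv, hw⟩

lemma mk_adjPillar (hN : Nonneg C) {x y zb zt x' y' l : ℤ} (hside : IsSide x y x' y')
    (h1 : zb ≤ l) (h2 : l ≤ zt) (hmem : (x', y', l) ∈ C) :
    ∃ b t, AdjPillar C x y zb zt x' y' b t ∧ b ≤ l ∧ l ≤ t := by
  obtain ⟨b, t, hpil, hb, ht⟩ := exists_pillar_mem hN hmem
  have hb' : b ≤ l := hb
  have ht' : l ≤ t := ht
  exact ⟨b, t, ⟨hpil, hside, by omega, by omega⟩, hb', ht'⟩

lemma adjPillar_cube {x y zb zt x' y' b t l : ℤ} (h : AdjPillar C x y zb zt x' y' b t)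
    (h1 : b ≤ l) (h2 : l ≤ t) : (x', y', l) ∈ C :=
  h.1.1.2 (mem_pillarSet'.2 ⟨rfl, rfl, h1, h2⟩)

lemma pillarSet_empty {x y zb zt : ℤ} (h : zt < zb) : pillarSet x y zb zt = ∅ := by
  unfold pillarSet
  rw [Finset.Icc_eq_empty (by omega)]
  simp

lemma erase_eq_union {x y zb zt γ : ℤ} (hQC : pillarSet x y zb zt ⊆ C)
    (h1 : zb ≤ γ) (h2 : γ ≤ zt) :
    C.erase (x, y, γ) =
      (C \ pillarSet x y zb zt ∪ pillarSet x y zb (γ - 1)) ∪ pillarSet x y (γ + 1) zt := by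
  ext c
  obtain ⟨cx, cy, cz⟩ := c
  simp only [Finset.mem_erase, Finset.mem_union, Finset.mem_sdiff, mem_pillarSet, ne_eq,
    Prod.mk.injEq, not_and]
  constructor
  · rintro ⟨hne, hc⟩
    by_cases hcol : cx = x ∧ cy = y ∧ zb ≤ cz ∧ cz ≤ zt
    · obtain ⟨rfl, rfl, h3, h4⟩ := hcol
      have hz : cz ≠ γ := hne rfl rfl
      rcases lt_or_gt_of_ne hz with h | h
      · exact Or.inl (Or.inr ⟨rfl, rfl, h3, by omega⟩)
      · exact Or.inr ⟨rfl, rfl, by omega, h4⟩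
    · exact Or.inl (Or.inl ⟨hc, fun ha hb hc hd => hcol ⟨ha, hb, hc, hd⟩⟩)
  · rintro ((⟨hc, hnq⟩ | ⟨rfl, rfl, h3, h4⟩) | ⟨rfl, rfl, h3, h4⟩)
    · refine ⟨fun ha hb hcc => ?_, hc⟩
      exact (hnq ha hb (by omega) (by omega)).elim
    · exact ⟨fun ha => by omega, hQC (mem_pillarSet'.2 ⟨rfl, rfl, h3, by omega⟩)⟩
    · exact ⟨fun ha => by omega, hQC (mem_pillarSet'.2 ⟨rfl, rfl, by omega, h4⟩)⟩

end Dev2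
section Dev3

open Finset

variable {C : Finset Cube}

lemma cond_contra (hC : Conn C) (hN : Nonneg C) (hae : NoCondAE C)
    {x y zb zt : ℤ} (hP : IsPillar C x y zb zt) (hzb : 1 ≤ zb)
    (hne : (C \ pillarSet x y zb zt).Nonempty)
    (hcn : Conn (C \ pillarSet x y zb zt)) : False := by
  classical
  obtain ⟨⟨hbt, hQC⟩, hbelow, habove⟩ := hP
  have hnc := hae x y zb zt ⟨hbt, hQC⟩ (Or.inr hcn)
  have hnB : ¬ CondB C x y zb zt := fun h => hnc (Or.inr (Or.inl h))
  have hnC : ¬ CondC C x y zb zt := fun h => hnc (Or.inr (Or.inr (Or.inl h)))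
  have hnD : ¬ CondD C x y zb zt := fun h => hnc (Or.inr (Or.inr (Or.inr (Or.inl h))))
  have hnE : ¬ CondE C x y zb zt := fun h => hnc (Or.inr (Or.inr (Or.inr (Or.inr h))))
  -- Step 1: all adjacent pillars have bottom ≥ zb
  have hstep1 : ∀ x' y' b t, AdjPillar C x y zb zt x' y' b t → zb ≤ b := by
    intro x' y' b t h
    by_contra hlt
    exact hnC ⟨hbelow, x', y', b, t, h, by omega⟩
  -- Step 2: all adjacent pillars have bottom > zb
  have hstep2 : ∀ x' y' b t, AdjPillar C x y zb zt x' y' b t → zb + 1 ≤ b := by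
    intro x' y' b t h
    rcases eq_or_lt_of_le (hstep1 x' y' b t h) with heq | h2
    · exfalso
      refine hnD ⟨hbelow, x', y', b, t, h, ?_, heq.symm, by omega⟩
      intro zb'' zt'' h''
      rw [← heq]
      exact hstep1 _ _ _ _ h''
    · omega
  -- Step 3: all sides empty at level zb
  have hside_empty : ∀ x' y', IsSide x y x' y' → ((x', y', zb) : Cube) ∉ C := by
    intro x' y' hs hmem
    obtain ⟨b, t, hadj, hb, -⟩ := mk_adjPillar hN hs (le_refl zb) hbt hmem
    have := hstep2 _ _ _ _ hadj
    omega
  -- there exists some adjacent pillar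
  have hexadj : ∃ x1 y1 b1 t1, AdjPillar C x y zb zt x1 y1 b1 t1 := by
    obtain ⟨a1, ha1⟩ := hne
    have hq0 : ((x, y, zb) : Cube) ∈ pillarSet x y zb zt :=
      mem_pillarSet'.2 ⟨rfl, rfl, le_refl _, hbt⟩
    have ha1' := Finset.mem_sdiff.1 ha1
    obtain ⟨v, hv, w, hwQ, hvw⟩ := (hC.2 a1 ha1'.1 (x, y, zb) (hQC hq0)).elim
      (fun wk => reach_enters hQC wk ha1'.2 hq0)
    obtain ⟨vx, vy, vz⟩ := v
    obtain ⟨wx, wy, wz⟩ := w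
    obtain ⟨hwx, hwy, hw1, hw2⟩ := mem_pillarSet'.1 hwQ
    have hvCQ := Finset.mem_sdiff.1 (comp_subset hv)
    have hvC : ((vx, vy, vz) : Cube) ∈ C := hvCQ.1
    have hvnQ : ¬ (vx = x ∧ vy = y ∧ zb ≤ vz ∧ vz ≤ zt) := fun h => hvCQ.2 (mem_pillarSet'.2 h)
    rcases cubeAdj_cases hvw with ⟨hz, hside⟩ | ⟨hx, hy, hzz⟩
    · have hz' : vz = wz := hz
      have hside0 : IsSide wx wy vx vy := hside
      rw [hwx, hwy] at hside0
      obtain ⟨b, t, hadj, -, -⟩ := mk_adjPillar hN hside0 (show zb ≤ vz by omega)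
        (show vz ≤ zt by omega) hvC
      exact ⟨vx, vy, b, t, hadj⟩
    · exfalso
      have hx' : vx = wx := hx
      have hy' : vy = wy := hy
      have hzz' : vz = wz + 1 ∨ vz = wz - 1 := hzz
      have : (vx = x ∧ vy = y) ∧ (vz = zb - 1 ∨ vz = zt + 1) := by
        constructor
        · exact ⟨by omega, by omega⟩
        · omega
      obtain ⟨⟨rfl, rfl⟩, h | h⟩ := this
      · rw [h] at hvC; exact hbelow hvC
      · rw [h] at hvC; exact habove hvC
  -- the finite set of bottoms of adjacent pillars
  set Bs := (Finset.Icc (zb + 1) zt).filter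
    (fun β => ∃ x' y' t, AdjPillar C x y zb zt x' y' β t) with hBsdef
  have mem_Bs : ∀ x' y' b t, AdjPillar C x y zb zt x' y' b t → b ∈ Bs := by
    intro x' y' b t h
    rw [hBsdef]
    exact Finset.mem_filter.2 ⟨Finset.mem_Icc.2 ⟨hstep2 _ _ _ _ h, h.2.2.1⟩, ⟨x', y', t, h⟩⟩
  obtain ⟨x1, y1, b1, t1, hadj1⟩ := hexadj
  have hBne : Bs.Nonempty := ⟨b1, mem_Bs _ _ _ _ hadj1⟩
  set mβ := Bs.min' hBne with hmβdef
  have hmem : mβ ∈ Bs := Finset.min'_mem _ _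
  have hmβbd : zb + 1 ≤ mβ ∧ mβ ≤ zt := Finset.mem_Icc.1 (Finset.mem_filter.1 hmem).1
  obtain ⟨xm, ym, tm, hadjm⟩ := (Finset.mem_filter.1 hmem).2
  have hminle : ∀ x' y' b t, AdjPillar C x y zb zt x' y' b t → mβ ≤ b :=
    fun x' y' b t h => Finset.min'_le _ _ (mem_Bs _ _ _ _ h)
  have hmtm : mβ ≤ tm := hadjm.1.1.1
  have humem : ((xm, ym, mβ) : Cube) ∈ C \ pillarSet x y zb zt :=
    Finset.mem_sdiff.2 ⟨adjPillar_cube hadjm le_rfl hmtm,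
      fun hq => side_ne_col hadjm.2.1 ⟨(mem_pillarSet'.1 hq).1, (mem_pillarSet'.1 hq).2.1⟩⟩
  by_cases hbig : ∃ β ∈ Bs, mβ + 2 ≤ β
  · -- Subcase B : a second, much higher bottom exists
    have hB2ne : (Bs.filter (fun β => mβ + 2 ≤ β)).Nonempty := by
      obtain ⟨β, h1, h2⟩ := hbig
      exact ⟨β, Finset.mem_filter.2 ⟨h1, h2⟩⟩
    set β2 := (Bs.filter (fun β => mβ + 2 ≤ β)).min' hB2ne with hβ2def
    have hβ2mem : β2 ∈ Bs.filter (fun β => mβ + 2 ≤ β) := Finset.min'_mem _ _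
    have hβ2Bs : β2 ∈ Bs := (Finset.mem_filter.1 hβ2mem).1
    have hβ2ge : mβ + 2 ≤ β2 := (Finset.mem_filter.1 hβ2mem).2
    have hβ2bd : zb + 1 ≤ β2 ∧ β2 ≤ zt := Finset.mem_Icc.1 (Finset.mem_filter.1 hβ2Bs).1
    obtain ⟨x2, y2, t2, hadj2⟩ := (Finset.mem_filter.1 hβ2Bs).2
    have hβ2t2 : β2 ≤ t2 := hadj2.1.1.1
    have hLconn : Conn (pillarSet x y zb (β2 - 2)) := conn_pillarSet (by omega)
    have hUconn : Conn (pillarSet x y β2 zt) := conn_pillarSet (by omega)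
    have hGL : Conn ((C \ pillarSet x y zb zt) ∪ pillarSet x y zb (β2 - 2)) :=
      conn_union hcn hLconn humem
        (mem_pillarSet'.2 ⟨rfl, rfl, by omega, by omega⟩) (side_adj hadjm.2.1)
    have hu2 : ((x2, y2, β2) : Cube) ∈ C \ pillarSet x y zb zt :=
      Finset.mem_sdiff.2 ⟨adjPillar_cube hadj2 le_rfl hβ2t2,
        fun hq => side_ne_col hadj2.2.1 ⟨(mem_pillarSet'.1 hq).1, (mem_pillarSet'.1 hq).2.1⟩⟩
    have hGLU : Conn (((C \ pillarSet x y zb zt) ∪ pillarSet x y zb (β2 - 2)) ∪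
        pillarSet x y β2 zt) :=
      conn_union hGL hUconn (Finset.mem_union_left _ hu2)
        (mem_pillarSet'.2 ⟨rfl, rfl, le_refl _, by omega⟩) (side_adj hadj2.2.1)
    have herase : C.erase (x, y, β2 - 1) =
        ((C \ pillarSet x y zb zt) ∪ pillarSet x y zb (β2 - 2)) ∪ pillarSet x y β2 zt := by
      have h := erase_eq_union hQC (show zb ≤ β2 - 1 by omega) (show β2 - 1 ≤ zt by omega)
      have e1 : β2 - 1 - 1 = β2 - 2 := by ring
      have e2 : β2 - 1 + 1 = β2 := by ring
      rw [e1, e2] at h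
      exact h
    exact hnB ⟨x2, y2, β2, t2, hadj2, by omega, fun hcut => hcut.2 (herase ▸ hGLU)⟩
  · have hsmall : ∀ β ∈ Bs, β ≤ mβ + 1 := by
      intro β hβ
      by_contra hgt
      exact hbig ⟨β, hβ, by omega⟩
    by_cases hm1 : mβ = zb + 1
    · -- Subcase A : bottom cube of the pillar is not a cut cube
      have hUconn : Conn (pillarSet x y (zb + 1) zt) := conn_pillarSet (by omega)
      have hGU : Conn ((C \ pillarSet x y zb zt) ∪ pillarSet x y (zb + 1) zt) :=
        conn_union hcn hUconn humem
          (mem_pillarSet'.2 ⟨rfl, rfl, by omega, by omega⟩) (side_adj hadjm.2.1)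
      have herase : C.erase (x, y, zb) =
          (C \ pillarSet x y zb zt) ∪ pillarSet x y (zb + 1) zt := by
        have h := erase_eq_union hQC (le_refl zb) hbt
        rw [pillarSet_empty (show zb - 1 < zb by omega), Finset.union_empty] at h
        exact h
      refine hnB ⟨xm, ym, mβ, tm, hadjm, by omega, fun hcut => hcut.2 ?_⟩
      have e : mβ - 1 = zb := by omega
      rw [e, herase]
      exact hGU
    · -- Subcase C : condition (e)
      have hmge : zb + 2 ≤ mβ := by omega
      apply hnE
      refine ⟨?_, xm, ym, mβ, tm, hadjm, by omega, ?_, ?_⟩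
      · intro x' y' b t b' t' h h'
        have hb1 : mβ ≤ b := hminle _ _ _ _ h
        have hb2 : b ≤ mβ + 1 := hsmall _ (mem_Bs _ _ _ _ h)
        have hb1' : mβ ≤ b' := hminle _ _ _ _ h'
        have hb2' : b' ≤ mβ + 1 := hsmall _ (mem_Bs _ _ _ _ h')
        have hbt' : b ≤ t := h.1.1.1
        have hbt'' : b' ≤ t' := h'.1.1.1
        rcases lt_trichotomy b b' with hlt | heq | hgt
        · exfalso
          have e : b' - 1 = b := by omega
          exact h'.1.2.1 (by rw [e]; exact adjPillar_cube h le_rfl hbt')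
        · subst heq
          exact pillar_eq h.1 h'.1 le_rfl hbt' le_rfl hbt''
        · exfalso
          have e : b - 1 = b' := by omega
          exact h.1.2.1 (by rw [e]; exact adjPillar_cube h' le_rfl hbt'')
      · intro x'' y'' b t h _
        exact hminle _ _ _ _ h
      · by_cases hxm : xm = x - 1 ∧ ym = y
        · refine ⟨x + 1, y, Or.inr (Or.inl ⟨rfl, rfl⟩), ?_,
            hside_empty _ _ (Or.inr (Or.inl ⟨rfl, rfl⟩))⟩
          intro heq
          rw [Prod.mk.injEq] at heq
          omega
        · refine ⟨x - 1, y, Or.inl ⟨rfl, rfl⟩, ?_, hside_empty _ _ (Or.inl ⟨rfl, rfl⟩)⟩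
          intro heq
          rw [Prod.mk.injEq] at heq
          exact hxm ⟨heq.1.symm ▸ rfl, heq.2.symm ▸ rfl⟩

end Dev3
section Dev4

open Finset

variable {C H : Finset Cube}

lemma no_floating_base (hC : Conn C) (hN : Nonneg C) (hae : NoCondAE C)
    {a0 : Cube} {x y zb zt : ℤ} (hP : IsPillar C x y zb zt) (hzb : 1 ≤ zb)
    (ha0Q : a0 ∈ C \ pillarSet x y zb zt)
    (hBe : (C \ pillarSet x y zb zt) \ comp (C \ pillarSet x y zb zt) a0 = ∅) : False := by
  have heq : C \ pillarSet x y zb zt = comp (C \ pillarSet x y zb zt) a0 := by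
    apply Finset.Subset.antisymm _ comp_subset
    intro c hc
    by_contra hcc
    have : c ∈ (C \ pillarSet x y zb zt) \ comp (C \ pillarSet x y zb zt) a0 :=
      Finset.mem_sdiff.2 ⟨hc, hcc⟩
    rw [hBe] at this
    exact absurd this (Finset.notMem_empty c)
  have hcn : Conn (C \ pillarSet x y zb zt) := by
    rw [heq]
    exact conn_comp ha0Q
  exact cond_contra hC hN hae hP hzb ⟨a0, ha0Q⟩ hcn

lemma no_floating_aux (hC : Conn C) (hN : Nonneg C) (hae : NoCondAE C)
    (hH : IsHighComp C H) (hconn : Conn (C \ H)) {a0 : Cube} (ha0 : a0 ∈ C \ H) :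
    ∀ n : ℕ, ∀ x y zb zt : ℤ, IsPillar C x y zb zt → 1 ≤ zb →
      pillarSet x y zb zt ⊆ H →
      ((C \ pillarSet x y zb zt) \ comp (C \ pillarSet x y zb zt) a0).card ≤ n → False := by
  have hHC : H ⊆ C := fun c hc => (Finset.mem_filter.1 (hH.1 hc)).1
  have hHpos : ∀ c ∈ H, 0 < c.2.2 := fun c hc => (Finset.mem_filter.1 (hH.1 hc)).2
  intro n
  induction n with
  | zero =>
    intro x y zb zt hP hzb hsub hcard
    have ha0Q : a0 ∈ C \ pillarSet x y zb zt := by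
      obtain ⟨h1, h2⟩ := Finset.mem_sdiff.1 ha0
      exact Finset.mem_sdiff.2 ⟨h1, fun hq => h2 (hsub hq)⟩
    exact no_floating_base hC hN hae hP hzb ha0Q (Finset.card_eq_zero.1 (by omega))
  | succ n ih =>
    intro x y zb zt hP hzb hsub hcard
    have ha0Q : a0 ∈ C \ pillarSet x y zb zt := by
      obtain ⟨h1, h2⟩ := Finset.mem_sdiff.1 ha0
      exact Finset.mem_sdiff.2 ⟨h1, fun hq => h2 (hsub hq)⟩
    rcases Finset.eq_empty_or_nonempty
      ((C \ pillarSet x y zb zt) \ comp (C \ pillarSet x y zb zt) a0) with hBe | ⟨c, hcB⟩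
    · exact no_floating_base hC hN hae hP hzb ha0Q hBe
    · -- the bad set is nonempty: find a floating pillar inside it with smaller bad set
      set Q := pillarSet x y zb zt with hQdef
      set G := comp (C \ Q) a0 with hGdef
      -- C \ H lies in the good component
      have hCH : C \ H ⊆ G := by
        intro b hb
        refine mem_comp.2 ⟨?_, ?_⟩
        · obtain ⟨h1, h2⟩ := Finset.mem_sdiff.1 hb
          exact Finset.mem_sdiff.2 ⟨h1, fun hq => h2 (hsub hq)⟩
        · refine reach_mono ?_ (hconn.2 a0 ha0 b hb)
          intro d hd
          obtain ⟨h1, h2⟩ := Finset.mem_sdiff.1 hd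
          exact Finset.mem_sdiff.2 ⟨h1, fun hq => h2 (hsub hq)⟩
      obtain ⟨hcCQ, hcG⟩ := Finset.mem_sdiff.1 hcB
      obtain ⟨hcC, hcQ⟩ := Finset.mem_sdiff.1 hcCQ
      -- the pillar of C through c
      obtain ⟨rb, rt, hRpil, hrb, hrt⟩ := exists_pillar_mem hN hcC
      set R := pillarSet c.1 c.2.1 rb rt with hRdef
      have hRC : R ⊆ C := hRpil.1.2
      have hrbt : rb ≤ rt := hRpil.1.1
      -- R is disjoint from Q
      have hRQ : ∀ u ∈ R, u ∉ Q := by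
        intro u huR huQ
        obtain ⟨hu1, hu2, hu3, hu4⟩ := mem_pillarSet.1 huR
        obtain ⟨hu1', hu2', hu3', hu4'⟩ := mem_pillarSet.1 huQ
        have hcx : c.1 = x := by omega
        have hcy : c.2.1 = y := by omega
        rw [hcx, hcy] at hRpil
        obtain ⟨he1, he2⟩ := pillar_eq hRpil hP (le_trans hu3 (le_of_eq rfl)) hu4
          (by omega) (by omega)
        apply hcQ
        rw [hQdef, ← hcx, ← hcy, ← he1, ← he2]
        exact mem_pillarSet.2 ⟨rfl, rfl, hrb, hrt⟩
      have hRCQ : R ⊆ C \ Q := fun u hu => Finset.mem_sdiff.2 ⟨hRC hu, hRQ u hu⟩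
      -- R is contained in the bad set
      have hRB : ∀ u ∈ R, u ∉ G := by
        intro u huR huG
        apply hcG
        obtain ⟨hu1, hu2, hu3, hu4⟩ := mem_pillarSet.1 huR
        have hreach : (gph (C \ Q)).Reachable u c := by
          have h1 : (gph (C \ Q)).Reachable (c.1, c.2.1, u.2.2) (c.1, c.2.1, c.2.2) :=
            reach_pillar' hRCQ hu3 hu4 hrb hrt
          have hu' : u = (c.1, c.2.1, u.2.2) := by
            rw [← hu1, ← hu2]
          have hc' : c = (c.1, c.2.1, c.2.2) := rfl
          rw [hu', hc'] at *
          exact h1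
        exact mem_comp.2 ⟨hcCQ, (mem_comp.1 huG).2.trans hreach⟩
      -- R ⊆ H
      have hRH : R ⊆ H := by
        intro u huR
        by_contra huH
        exact hRB u huR (hCH (Finset.mem_sdiff.2 ⟨hRC huR, huH⟩))
      -- bottom of R is positive
      have hrb1 : 1 ≤ rb := by
        have : ((c.1, c.2.1, rb) : Cube) ∈ R := mem_pillarSet'.2 ⟨rfl, rfl, le_refl _, hrbt⟩
        have := hHpos _ (hRH this)
        simp at this; omega
      -- now compare bad sets
      have ha0R : a0 ∈ C \ R := by
        obtain ⟨h1, h2⟩ := Finset.mem_sdiff.1 ha0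
        exact Finset.mem_sdiff.2 ⟨h1, fun hq => h2 (hRH hq)⟩
      set GR := comp (C \ R) a0 with hGRdef
      -- the old good component is still good
      have hGGR : G ⊆ GR := by
        intro b hb
        have hbCR : b ∈ C \ R := by
          obtain ⟨h1, h2⟩ := Finset.mem_sdiff.1 (comp_subset hb)
          exact Finset.mem_sdiff.2 ⟨h1, fun hq => hRB b hq hb⟩
        refine mem_comp.2 ⟨hbCR, ?_⟩
        refine reach_mono ?_ (reach_in_comp hb)
        intro d hd
        obtain ⟨h1, h2⟩ := Finset.mem_sdiff.1 (comp_subset hd)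
        exact Finset.mem_sdiff.2 ⟨h1, fun hq => hRB d hq hd⟩
      -- Q is also in the new good component
      have hQCR : Q ⊆ C \ R := by
        intro u hu
        refine Finset.mem_sdiff.2 ⟨hP.1.2 hu, fun hq => hRQ u hq hu⟩
      have hQGR : Q ⊆ GR := by
        have hq0 : ((x, y, zb) : Cube) ∈ Q := mem_pillarSet'.2 ⟨rfl, rfl, le_refl _, hP.1.1⟩
        obtain ⟨h1, h2⟩ := Finset.mem_sdiff.1 ha0
        obtain ⟨v, hv, w, hwQ, hvw⟩ := (hC.2 a0 h1 (x, y, zb) (hP.1.2 hq0)).elim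
          (fun wk => reach_enters hP.1.2 wk (Finset.mem_sdiff.1 ha0Q).2 hq0)
        -- v ∈ G, w ∈ Q adjacent
        have hvGR : v ∈ GR := hGGR hv
        have hwGR : w ∈ GR := comp_closed hvGR (hQCR hwQ) hvw
        intro u hu
        obtain ⟨wx, wy, wz⟩ := w
        obtain ⟨hw1, hw2, hw3, hw4⟩ := mem_pillarSet'.1 hwQ
        obtain ⟨hu1, hu2, hu3, hu4⟩ := mem_pillarSet.1 hu
        have hreach : (gph (C \ R)).Reachable (wx, wy, wz) u := by
          have h1 : (gph (C \ R)).Reachable (x, y, wz) (x, y, u.2.2) :=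
            reach_pillar' (hQdef ▸ hQCR) hw3 hw4 hu3 hu4
          have hu' : u = (x, y, u.2.2) := by
            obtain ⟨ux, uy, uz⟩ := u
            simp only at hu1 hu2
            rw [hu1, hu2]
          rw [hu', hw1, hw2]
          exact h1
        exact mem_comp.2 ⟨hQCR hu, (mem_comp.1 hwGR).2.trans hreach⟩
      -- new bad set is strictly smaller
      have hBRsub : (C \ R) \ GR ⊆ ((C \ Q) \ G).erase c := by
        intro b hb
        obtain ⟨hb1, hb2⟩ := Finset.mem_sdiff.1 hb
        obtain ⟨hb3, hb4⟩ := Finset.mem_sdiff.1 hb1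
        have hbQ : b ∉ Q := fun hq => hb2 (hQGR hq)
        have hbG : b ∉ G := fun hg => hb2 (hGGR hg)
        refine Finset.mem_erase.2 ⟨?_, Finset.mem_sdiff.2 ⟨Finset.mem_sdiff.2 ⟨hb3, hbQ⟩, hbG⟩⟩
        intro hbc
        apply hb4
        rw [hbc, hRdef]
        exact mem_pillarSet.2 ⟨rfl, rfl, hrb, hrt⟩
      have hcard' : ((C \ R) \ GR).card ≤ n := by
        have h1 : (((C \ Q) \ G).erase c).card = ((C \ Q) \ G).card - 1 :=
          Finset.card_erase_of_mem hcB
        have h2 := Finset.card_le_card hBRsub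
        have h3 : 1 ≤ ((C \ Q) \ G).card := Finset.card_pos.2 ⟨c, hcB⟩
        omega
      exact ih c.1 c.2.1 rb rt hRpil hrb1 hRH hcard'

lemma no_floating (hC : Conn C) (hN : Nonneg C) (hae : NoCondAE C)
    (hH : IsHighComp C H) (hconn : Conn (C \ H)) {x y zb zt : ℤ}
    (hP : IsPillar C x y zb zt) (hzb : 1 ≤ zb) (hsub : pillarSet x y zb zt ⊆ H) : False := by
  obtain ⟨a0, ha0⟩ := hconn.1
  exact no_floating_aux hC hN hae hH hconn ha0
    ((C \ pillarSet x y zb zt) \ comp (C \ pillarSet x y zb zt) a0).card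
    x y zb zt hP hzb hsub (le_refl _)

end Dev4
/-- Corollary 6: under the same hypotheses, every pillar of such a
high component `H` is contained in a pillar of `C` whose bottommost cube has
`z`-coordinate `0`. -/
theorem high_component_pillars_grounded (C : Finset Cube) (hC : Conn C) (hN : Nonneg C)
    (hcard : 2 ≤ C.card) (hunf : ¬ (∀ c ∈ C, FinishedCube C c))
    (hae : NoCondAE C) (hf : ¬ MoveTypeF C)
    (H : Finset Cube) (hH : IsHighComp C H) (hconn : Conn (C \ H)) :
    ∀ x y zb zt, IsPillar H x y zb zt →
      ∃ zt' : ℤ, IsPillar C x y 0 zt' ∧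
        pillarSet x y zb zt ⊆ pillarSet x y 0 zt' := by
  intro x y zb zt hPH
  obtain ⟨⟨hbt, hsubH⟩, hbelowH, haboveH⟩ := hPH
  have hHC : H ⊆ C := fun c hc => (Finset.mem_filter.1 (hH.1 hc)).1
  have hHpos : ∀ c ∈ H, 0 < c.2.2 := fun c hc => (Finset.mem_filter.1 (hH.1 hc)).2
  have hbotH : ((x, y, zb) : Cube) ∈ H := hsubH (mem_pillarSet'.2 ⟨rfl, rfl, le_refl _, hbt⟩)
  have htopH : ((x, y, zt) : Cube) ∈ H := hsubH (mem_pillarSet'.2 ⟨rfl, rfl, hbt, le_refl _⟩)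
  have hzb1 : 1 ≤ zb := by
    have := hHpos _ hbotH
    simp at this; omega
  -- the cell above the pillar is not in C
  have habove : ((x, y, zt + 1) : Cube) ∉ C := by
    intro h
    apply haboveH
    refine hH.2.2 (x, y, zt) htopH (x, y, zt + 1) ?_ cubeAdj_vert
    refine Finset.mem_filter.2 ⟨h, ?_⟩
    show (0 : ℤ) < zt + 1
    omega
  by_cases hbel : ((x, y, zb - 1) : Cube) ∈ C
  · -- the pillar rests on the ground
    have hzb : zb = 1 := by
      by_contra hne
      have hz2 : 2 ≤ zb := by omega
      have hpos : ((x, y, zb - 1) : Cube) ∈ Cpos C := by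
        refine Finset.mem_filter.2 ⟨hbel, ?_⟩
        show (0 : ℤ) < zb - 1
        omega
      have hadj : cubeAdj (x, y, zb - 1) (x, y, zb) := by
        show (x - x).natAbs + (y - y).natAbs + (zb - 1 - zb).natAbs = 1
        omega
      exact hbelowH (hH.2.2 (x, y, zb) hbotH (x, y, zb - 1) hpos (cubeAdj_symm hadj))
    refine ⟨zt, ⟨⟨by omega, ?_⟩, ?_, habove⟩, ?_⟩
    · intro c hcmem
      obtain ⟨cx, cy, cz⟩ := c
      obtain ⟨rfl, rfl, h1, h2⟩ := mem_pillarSet'.1 hcmem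
      rcases eq_or_lt_of_le h1 with h | h
      · have e : cz = zb - 1 := by omega
        rw [e]
        exact hbel
      · exact hHC (hsubH (mem_pillarSet'.2 ⟨rfl, rfl, by omega, h2⟩))
    · intro h
      have : (0 : ℤ) ≤ 0 - 1 := (hN _ h).2.2
      omega
    · intro c hcmem
      obtain ⟨cx, cy, cz⟩ := c
      obtain ⟨rfl, rfl, h1, h2⟩ := mem_pillarSet'.1 hcmem
      exact mem_pillarSet'.2 ⟨rfl, rfl, by omega, h2⟩
  · -- floating pillar : contradiction
    exfalso
    exact no_floating hC hN hae hH hconn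
      ⟨⟨hbt, fun c hc => hHC (hsubH hc)⟩, hbel, habove⟩ hzb1 hsubH
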